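/- Let a > 0 and let f : ℝ → ℂ be a Schwartz function. Then for every z ∈ ℂ, [B_{a/2}( f′ )](z) = (B_{a/2}f)′(z) − (a/2)·z·(B_{a/2}f)(z), where f′ is the derivative of f and (B_{a/2}f)′ denotes the complex derivative of the entire function B_{a/2}f. -/

import Mathlib

/-! With `K(x, w) = exp(a x w - (a/2) x² - (a/4) w²)` one has `∂ₓK = -∂_w K + (a/2) w K`.
Integrating `f' K` by parts and differentiating `∫ f K` under the integral sign in `w` gives
the identity. Both steps are justified by completing the square,
`|K(x, w)| = exp((a/4)|w|² - (a/2)(x - Re w)²) ≤ exp((a/4)|w|²)`. -/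

open Complex Real SchwartzMap

/-- The (parametrized) Bargmann transform `B_{a/2}`:
`(B_{a/2}f)(z) = (a/π)^{1/4} ∫_ℝ f(x) e^{axz − (a/2)x² − (a/4)z²} dx`. -/
noncomputable def bargmann (a : ℝ) (f : ℝ → ℂ) (z : ℂ) : ℂ :=
  ((a / Real.pi) ^ ((1 : ℝ) / 4) : ℝ) *
    ∫ x : ℝ, f x * Complex.exp (a * x * z - (a / 2) * x ^ 2 - (a / 4) * z ^ 2)

open MeasureTheory Filter Metric

noncomputable def bargmannKernel (a x : ℝ) (w : ℂ) : ℂ :=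
  cexp (a * x * w - a / 2 * x ^ 2 - a / 4 * w ^ 2)

lemma bargmann_eq_integral_mul_bargmannKernel (a : ℝ) (f : ℝ → ℂ) (w : ℂ) :
    bargmann a f w = ((a / π) ^ ((1 : ℝ) / 4) : ℝ) * ∫ x, f x * bargmannKernel a x w :=
  rfl

lemma norm_bargmannKernel (a x : ℝ) (w : ℂ) :
    ‖bargmannKernel a x w‖ = Real.exp (a / 4 * ‖w‖ ^ 2 - a / 2 * (x - w.re) ^ 2) := by
  rw [bargmannKernel, Complex.norm_exp, ← Complex.normSq_eq_norm_sq, Complex.normSq_apply]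
  congr 1
  simp only [pow_two, sub_re, mul_re, ofReal_re, ofReal_im, mul_zero, sub_zero, mul_im, zero_mul,
    add_zero, div_ofNat_re, div_ofNat_im, zero_div]
  ring

lemma norm_bargmannKernel_le {a : ℝ} (ha : 0 ≤ a) (x : ℝ) {w : ℂ} {R : ℝ} (hw : ‖w‖ ≤ R) :
    ‖bargmannKernel a x w‖ ≤ Real.exp (a / 4 * R ^ 2) := by
  rw [norm_bargmannKernel]
  gcongr
  have : ‖w‖ ^ 2 ≤ R ^ 2 := pow_le_pow_left₀ (norm_nonneg w) hw 2
  nlinarith [sq_nonneg (x - w.re)]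

lemma continuous_bargmannKernel (a : ℝ) (w : ℂ) :
    Continuous fun x : ℝ => bargmannKernel a x w := by
  unfold bargmannKernel
  fun_prop

lemma hasDerivAt_bargmannKernel_param (a x : ℝ) (w : ℂ) :
    HasDerivAt (bargmannKernel a x) ((a * x - a / 2 * w) * bargmannKernel a x w) w := by
  have hexp : HasDerivAt (fun w : ℂ => a * x * w - a / 2 * x ^ 2 - a / 4 * w ^ 2)
      (a * x - a / 2 * w) w :=
    ((((hasDerivAt_id' w).const_mul ((a : ℂ) * x)).sub_const ((a : ℂ) / 2 * x ^ 2)).sub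
      ((hasDerivAt_pow 2 w).const_mul ((a : ℂ) / 4))).congr_deriv (by ring)
  exact hexp.cexp.congr_deriv (mul_comm _ _)

lemma hasDerivAt_bargmannKernel (a x : ℝ) (w : ℂ) :
    HasDerivAt (fun x : ℝ => bargmannKernel a x w) ((a * w - a * x) * bargmannKernel a x w) x := by
  have hexp : HasDerivAt (fun y : ℂ => a * y * w - a / 2 * y ^ 2 - a / 4 * w ^ 2)
      (a * w - a * x) x :=
    (((((hasDerivAt_id' (x : ℂ)).const_mul (a : ℂ)).mul_const w).sub
      ((hasDerivAt_pow 2 (x : ℂ)).const_mul ((a : ℂ) / 2))).sub_const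
        ((a : ℂ) / 4 * w ^ 2)).congr_deriv (by ring)
  exact hexp.cexp.comp_ofReal.congr_deriv (mul_comm _ _)

section

variable {a : ℝ} {f : ℝ → ℂ}

lemma MeasureTheory.Integrable.mul_bargmannKernel (hf : Integrable f) (ha : 0 ≤ a) (w : ℂ) :
    Integrable fun x => f x * bargmannKernel a x w :=
  hf.mul_bdd (continuous_bargmannKernel a w).aestronglyMeasurable
    (Eventually.of_forall fun x => norm_bargmannKernel_le ha x le_rfl)

lemma integrable_linear_mul_bargmannKernel (ha : 0 ≤ a) (hf : Integrable f)
    (hxf : Integrable fun x : ℝ => (x : ℂ) * f x) (c₁ c₀ w : ℂ) :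
    Integrable fun x => (c₁ * x - c₀) * f x * bargmannKernel a x w :=
  (((hxf.mul_bargmannKernel ha w).const_mul c₁).sub
    ((hf.mul_bargmannKernel ha w).const_mul c₀)).congr (Eventually.of_forall fun x => by
      simp only [Pi.sub_apply]
      ring)

lemma integral_linear_mul_bargmannKernel (ha : 0 ≤ a) (hf : Integrable f)
    (hxf : Integrable fun x : ℝ => (x : ℂ) * f x) (c₁ c₀ w : ℂ) :
    ∫ x, (c₁ * x - c₀) * f x * bargmannKernel a x w =
      c₁ * (∫ x, x * f x * bargmannKernel a x w) - c₀ * ∫ x, f x * bargmannKernel a x w := by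
  rw [← integral_const_mul, ← integral_const_mul, ← integral_sub
    ((hxf.mul_bargmannKernel ha w).const_mul c₁) ((hf.mul_bargmannKernel ha w).const_mul c₀)]
  congr 1 with x
  ring

lemma hasDerivAt_integral_mul_bargmannKernel (ha : 0 ≤ a) (hf : Integrable f)
    (hxf : Integrable fun x : ℝ => (x : ℂ) * f x) (z : ℂ) :
    HasDerivAt (fun w => ∫ x, f x * bargmannKernel a x w)
      (a * (∫ x, x * f x * bargmannKernel a x z) - a / 2 * z * ∫ x, f x * bargmannKernel a x z)
      z := by
  set R := ‖z‖ + 1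
  have hbound : ∀ x, ∀ w ∈ ball z 1,
      ‖(a * x - a / 2 * w) * f x * bargmannKernel a x w‖ ≤
        Real.exp (a / 4 * R ^ 2) * (a * ‖(x : ℂ) * f x‖ + a / 2 * R * ‖f x‖) := by
    intro x w hw
    have hwR : ‖w‖ ≤ R := by
      have := norm_le_norm_add_norm_sub' w z
      rw [← dist_eq_norm] at this
      linarith [mem_ball.1 hw]
    have hcoef : ‖(a * x - a / 2 * w) * f x‖ ≤ a * ‖(x : ℂ) * f x‖ + a / 2 * R * ‖f x‖ := by
      calc ‖(a * x - a / 2 * w) * f x‖ = ‖a * (x * f x) - a / 2 * w * f x‖ := by ring_nf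
        _ ≤ ‖a * (x * f x)‖ + ‖a / 2 * w * f x‖ := norm_sub_le _ _
        _ ≤ a * ‖(x : ℂ) * f x‖ + a / 2 * R * ‖f x‖ := by
          simp only [norm_mul, norm_div, Complex.norm_real, Real.norm_of_nonneg ha,
            Complex.norm_ofNat]
          gcongr
    rw [norm_mul, mul_comm (Real.exp _)]
    exact mul_le_mul hcoef (norm_bargmannKernel_le ha x hwR) (norm_nonneg _) (by positivity)
  have hderiv := (hasDerivAt_integral_of_dominated_loc_of_deriv_le (ball_mem_nhds z one_pos)
    (Eventually.of_forall fun w => (hf.mul_bargmannKernel ha w).aestronglyMeasurable)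
    (hf.mul_bargmannKernel ha z)
    (integrable_linear_mul_bargmannKernel ha hf hxf _ _ z).aestronglyMeasurable
    (Eventually.of_forall hbound)
    (((hxf.norm.const_mul a).add (hf.norm.const_mul (a / 2 * R))).const_mul _)
    (Eventually.of_forall fun x w _ =>
      ((hasDerivAt_bargmannKernel_param a x w).const_mul (f x)).congr_deriv (by ring))).2
  rwa [integral_linear_mul_bargmannKernel ha hf hxf] at hderiv

lemma integral_deriv_mul_bargmannKernel (ha : 0 ≤ a) {f' : ℝ → ℂ}
    (hf' : ∀ x, HasDerivAt f (f' x) x) (hf : Integrable f)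
    (hxf : Integrable fun x : ℝ => (x : ℂ) * f x) (hf'_int : Integrable f') (z : ℂ) :
    ∫ x, f' x * bargmannKernel a x z =
      a * (∫ x, x * f x * bargmannKernel a x z) - a * z * ∫ x, f x * bargmannKernel a x z := by
  have hlin := integrable_linear_mul_bargmannKernel ha hf hxf a (a * z) z
  have hparts := integral_mul_deriv_eq_deriv_mul_of_integrable
    (u := fun x => bargmannKernel a x z) (u' := fun x => (a * z - a * x) * bargmannKernel a x z)
    (fun x _ => hasDerivAt_bargmannKernel a x z) (fun x _ => hf' x)
    ((hf'_int.mul_bargmannKernel ha z).congr (Eventually.of_forall fun x => mul_comm _ _))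
    (hlin.neg.congr (Eventually.of_forall fun x => by
      simp only [Pi.mul_apply, Pi.neg_apply]
      ring))
    ((hf.mul_bargmannKernel ha z).congr (Eventually.of_forall fun x => mul_comm _ _))
  calc ∫ x, f' x * bargmannKernel a x z
      = -∫ x, (a * z - a * x) * bargmannKernel a x z * f x := by
        simpa only [mul_comm (f' _)] using hparts
    _ = ∫ x, (a * x - a * z) * f x * bargmannKernel a x z := by
        rw [← integral_neg]
        congr 1 with x
        ring
    _ = _ := integral_linear_mul_bargmannKernel ha hf hxf _ _ z

theorem bargmann_deriv_of_hasDerivAt (ha : 0 ≤ a) {f' : ℝ → ℂ}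
    (hf' : ∀ x, HasDerivAt f (f' x) x) (hf : Integrable f)
    (hxf : Integrable fun x : ℝ => (x : ℂ) * f x) (hf'_int : Integrable f') (z : ℂ) :
    bargmann a f' z = deriv (bargmann a f) z - a / 2 * z * bargmann a f z := by
  have hB : HasDerivAt (bargmann a f) _ z :=
    (hasDerivAt_integral_mul_bargmannKernel ha hf hxf z).const_mul
      (((a / π) ^ ((1 : ℝ) / 4) : ℝ) : ℂ)
  rw [hB.deriv, bargmann_eq_integral_mul_bargmannKernel, bargmann_eq_integral_mul_bargmannKernel,
    integral_deriv_mul_bargmannKernel ha hf' hf hxf hf'_int]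
  ring

end

/-- Bargmann transform of f': [B_{a/2}(f')](z) = (B f)'(z) - (a/2) z (B f)(z) for Schwartz f. -/
theorem bargmann_deriv (a : ℝ) (ha : 0 < a) (f : SchwartzMap ℝ ℂ) (z : ℂ) :
    bargmann a (fun x : ℝ => deriv (fun y : ℝ => f y) x) z =
      deriv (bargmann a (fun x : ℝ => f x)) z
        - ((a : ℂ) / 2) * z * bargmann a (fun x : ℝ => f x) z := by
  have hxf : Integrable fun x : ℝ => (x : ℂ) * f x :=
    (f.integrable_pow_mul volume 1).mono' (by fun_prop)
      (Eventually.of_forall fun x => by simp)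
  exact bargmann_deriv_of_hasDerivAt ha.le f.hasDerivAt f.integrable hxf
    (SchwartzMap.derivCLM ℝ ℂ f).integrable z
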